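/- arXiv:2202.00378 — 3 statements merged into one kernel-verified Lean document; each statement's English description precedes it below -/
import Mathlib

section
/- For every m ≥ 1 and every even n ≥ 2, the number of m-tuples (α_1,…,α_m) ∈ F_n^m that have a triple matching is at most (4m³/n)·|F_n|^m; equivalently, a uniformly random element of F_n^m has no triple matchings with probability at least 1 − 4m³/n. -/
open scoped Classical

/-- The set of fixed-point-free involutions of `{1,…,n}` (modeled on `Fin n`). -/
noncomputable def fpf (n : ℕ) : Finset (Equiv.Perm (Fin n)) :=
  Finset.univ.filter (fun σ => σ * σ = 1 ∧ ∀ i, σ i ≠ i)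

/-- A tuple `(α_1, …, α_m)` has a triple matching if `α_i(k) = α_j(k) = α_p(k)` for some `k`
and some distinct indices `i < j < p`. -/
def hasTripleMatching {m n : ℕ} (α : Fin m → Equiv.Perm (Fin n)) : Prop :=
  ∃ k : Fin n, ∃ i j p : Fin m, i < j ∧ j < p ∧ α i k = α j k ∧ α j k = α p k

/-!
Union bound over the at most `n m³` choices of a position `k` and indices `i < j < p`. Fix `k`
and let `N_v = #{σ ∈ F_n | σ k = v}`. Then `N_k = 0`, and conjugation by the transposition
`(v w)` identifies the fibres over any `v, w ≠ k`, so `N_v = |F_n| / (n - 1) ≤ 2 |F_n| / n`.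
Counting fibre by fibre, `α_i(k) = α_j(k) = α_p(k)` holds for
`∑_v N_v³ |F_n|^(m-3) ≤ (2 |F_n| / n)² ∑_v N_v |F_n|^(m-3) = 4 |F_n|^m / n²` tuples.
-/

open Finset Fintype

section Fibers

variable {α β ι : Type*} [Fintype ι] [DecidableEq ι] [DecidableEq β]

lemma card_piFinset_filter_forall_apply_eq (A : Finset α) (f : α → β) (s : Finset ι) (b : β) :
    #{x ∈ piFinset fun _ : ι => A | ∀ t ∈ s, f (x t) = b} =
      #{a ∈ A | f a = b} ^ #s * #A ^ #(sᶜ) := by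
  have hpi : {x ∈ piFinset fun _ : ι => A | ∀ t ∈ s, f (x t) = b} =
      piFinset fun t => if t ∈ s then {a ∈ A | f a = b} else A := by
    ext x
    simp only [mem_filter, mem_piFinset]
    grind
  rw [hpi, card_piFinset, prod_apply_ite, prod_const, prod_const, filter_mem_eq_inter,
    univ_inter, filter_not, filter_mem_eq_inter, univ_inter, compl_eq_univ_sdiff]

lemma card_piFinset_filter_apply_eq_apply_eq [Fintype β] (A : Finset α) (f : α → β) {i j p : ι}
    (hij : i ≠ j) (hip : i ≠ p) (hjp : j ≠ p) :
    #{x ∈ piFinset fun _ : ι => A | f (x i) = f (x j) ∧ f (x j) = f (x p)} =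
      ∑ b, #{a ∈ A | f a = b} ^ 3 * #A ^ (card ι - 3) := by
  have hcard : #({i, j, p} : Finset ι) = 3 := card_eq_three.mpr ⟨i, j, p, hij, hip, hjp, rfl⟩
  rw [card_eq_sum_card_fiberwise (f := fun x => f (x j)) (t := univ) fun _ _ => mem_univ _]
  refine sum_congr rfl fun b _ => ?_
  rw [← hcard, ← card_compl, ← card_piFinset_filter_forall_apply_eq, filter_filter]
  congr 1
  refine filter_congr fun x _ => ?_
  simp only [mem_insert, mem_singleton, forall_eq_or_imp, forall_eq]
  grind

end Fibers

open Equiv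

section FixedPointFreeInvolutions

variable {n : ℕ}

lemma mem_fpf {σ : Perm (Fin n)} : σ ∈ fpf n ↔ σ * σ = 1 ∧ ∀ i, σ i ≠ i := by
  simp [fpf]

lemma conj_mem_fpf {σ : Perm (Fin n)} (c : Perm (Fin n)) (hσ : σ ∈ fpf n) :
    c * σ * c⁻¹ ∈ fpf n := by
  rw [mem_fpf] at hσ ⊢
  refine ⟨?_, fun i h => hσ.2 (c⁻¹ i) ?_⟩
  · calc c * σ * c⁻¹ * (c * σ * c⁻¹) = c * (σ * σ) * c⁻¹ := by group
      _ = 1 := by rw [hσ.1, mul_one, mul_inv_cancel]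
  · rwa [Perm.mul_apply, Perm.mul_apply, ← Perm.eq_inv_iff_eq] at h

lemma card_fpf_filter_apply_eq_eq_of_ne (k : Fin n) {v w : Fin n} (hv : v ≠ k) (hw : w ≠ k) :
    #{σ ∈ fpf n | σ k = v} = #{σ ∈ fpf n | σ k = w} := by
  set c := swap v w
  have hc : c⁻¹ = c := swap_inv v w
  have hck : c k = k := swap_apply_of_ne_of_ne hv.symm hw.symm
  refine card_nbij' (fun σ => c * σ * c⁻¹) (fun σ => c * σ * c⁻¹) ?_ ?_ ?_ ?_ <;>
    intro σ hσ
  · simp only [coe_filter, Set.mem_ofPred_eq] at hσ ⊢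
    exact ⟨conj_mem_fpf c hσ.1, by simp [hc, hck, hσ.2, c]⟩
  · simp only [coe_filter, Set.mem_ofPred_eq] at hσ ⊢
    exact ⟨conj_mem_fpf c hσ.1, by simp [hc, hck, hσ.2, c]⟩
  · simp [hc, c, mul_assoc]
  · simp [hc, c, mul_assoc]

lemma card_fpf_filter_apply_eq_mul_le (k v : Fin n) :
    #{σ ∈ fpf n | σ k = v} * n ≤ 2 * #(fpf n) := by
  rcases eq_or_ne v k with rfl | hv
  · have : {σ ∈ fpf n | σ v = v} = ∅ := filter_eq_empty_iff.mpr fun σ hσ => (mem_fpf.mp hσ).2 v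
    simp [this]
  have hn : 1 < n := by simpa using Fintype.one_lt_card_iff.mpr ⟨v, k, hv⟩
  have hfib : #{σ ∈ fpf n | σ k = v} * (n - 1) ≤ #(fpf n) :=
    calc #{σ ∈ fpf n | σ k = v} * (n - 1)
        = ∑ w ∈ univ.erase k, #{σ ∈ fpf n | σ k = w} := by
          rw [sum_congr rfl fun w hw =>
              (card_fpf_filter_apply_eq_eq_of_ne k hv (ne_of_mem_erase hw)).symm,
            sum_const, card_erase_of_mem (mem_univ k), Finset.card_fin, smul_eq_mul, mul_comm]
      _ ≤ ∑ w, #{σ ∈ fpf n | σ k = w} := sum_le_sum_of_subset (erase_subset k univ)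
      _ = #(fpf n) := (card_eq_sum_card_fiberwise fun _ _ => mem_univ _).symm
  calc #{σ ∈ fpf n | σ k = v} * n ≤ #{σ ∈ fpf n | σ k = v} * (2 * (n - 1)) :=
        Nat.mul_le_mul_left _ (by omega)
    _ ≤ 2 * #(fpf n) := by rw [mul_left_comm]; exact Nat.mul_le_mul_left 2 hfib

lemma card_piFinset_fpf_filter_apply_eq_apply_eq_mul_sq_le {m : ℕ} (k : Fin n) {i j p : Fin m}
    (hij : i ≠ j) (hip : i ≠ p) (hjp : j ≠ p) :
    #{α ∈ piFinset fun _ : Fin m => fpf n | α i k = α j k ∧ α j k = α p k} * n ^ 2 ≤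
      4 * #(fpf n) ^ m := by
  have hm : 3 ≤ m := by
    simpa using (card_eq_three.mpr ⟨i, j, p, hij, hip, hjp, rfl⟩).symm.trans_le (card_le_univ _)
  rw [card_piFinset_filter_apply_eq_apply_eq (fpf n) (fun σ => σ k) hij hip hjp,
    Fintype.card_fin, sum_mul]
  calc ∑ v, #{σ ∈ fpf n | σ k = v} ^ 3 * #(fpf n) ^ (m - 3) * n ^ 2
      = ∑ v, #{σ ∈ fpf n | σ k = v} * (#{σ ∈ fpf n | σ k = v} * n) ^ 2 * #(fpf n) ^ (m - 3) :=
        sum_congr rfl fun v _ => by ring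
    _ ≤ ∑ v, #{σ ∈ fpf n | σ k = v} * (2 * #(fpf n)) ^ 2 * #(fpf n) ^ (m - 3) := by
        gcongr ∑ v, _ * ?_ ^ 2 * _ with v
        exact card_fpf_filter_apply_eq_mul_le k v
    _ = 4 * #(fpf n) ^ (3 + (m - 3)) := by
        rw [← sum_mul, ← sum_mul, ← card_eq_sum_card_fiberwise fun _ _ => mem_univ _]
        ring
    _ = 4 * #(fpf n) ^ m := by rw [Nat.add_sub_cancel' hm]

end FixedPointFreeInvolutions

theorem card_triple_matchings_le_general (m n : ℕ) :
    ((Finset.univ.filter (fun α : Fin m → Equiv.Perm (Fin n) =>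
        (∀ i, α i ∈ fpf n) ∧ hasTripleMatching α)).card : ℝ)
      ≤ (4 * m ^ 3 / n) * ((fpf n).card : ℝ) ^ m := by
  set T : Finset (Fin n × Fin m × Fin m × Fin m) := {q | q.2.1 < q.2.2.1 ∧ q.2.2.1 < q.2.2.2}
  set E : Fin n × Fin m × Fin m × Fin m → Finset (Fin m → Perm (Fin n)) := fun (k, i, j, p) =>
    {α ∈ piFinset fun _ => fpf n | α i k = α j k ∧ α j k = α p k}
  have hsub : ({α | (∀ i, α i ∈ fpf n) ∧ hasTripleMatching α} : Finset _) ⊆ T.biUnion E := by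
    rintro α hα
    obtain ⟨hF, k, i, j, p, hij, hjp, hk⟩ := (mem_filter.mp hα).2
    exact mem_biUnion.mpr ⟨(k, i, j, p), by simp [T, hij, hjp], by simp [E, hF, hk]⟩
  have hE : ∀ q ∈ T, (#(E q) : ℝ) ≤ 4 * #(fpf n) ^ m / n ^ 2 := by
    rintro ⟨k, i, j, p⟩ hq
    obtain ⟨hij, hjp⟩ := (mem_filter.mp hq).2
    have hn : (0 : ℝ) < n := by exact_mod_cast k.pos
    rw [le_div_iff₀ (by positivity)]
    exact_mod_cast
      card_piFinset_fpf_filter_apply_eq_apply_eq_mul_sq_le k hij.ne (hij.trans hjp).ne hjp.ne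
  have hT : (#T : ℝ) ≤ n * m ^ 3 := by
    exact_mod_cast (card_le_univ T).trans_eq (by simp [pow_three])
  calc _ ≤ (∑ q ∈ T, #(E q) : ℝ) := by exact_mod_cast (card_le_card hsub).trans card_biUnion_le
    _ ≤ #T * (4 * #(fpf n) ^ m / n ^ 2) := by simpa using sum_le_card_nsmul T _ _ hE
    _ ≤ n * m ^ 3 * (4 * #(fpf n) ^ m / n ^ 2) := by gcongr
    _ = 4 * m ^ 3 / n * #(fpf n) ^ m := by
        rcases eq_or_ne (n : ℝ) 0 with hn | hn
        · simp [hn]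
        · field_simp

/-- The number of `m`-tuples of fixed-point-free involutions of `{1,…,n}` with a triple
matching is at most `(4m³/n)·|F_n|^m`. -/
theorem card_triple_matchings_le (m n : ℕ) (hm : 1 ≤ m) (hn : Even n) (h2 : 2 ≤ n) :
    ((Finset.univ.filter (fun α : Fin m → Equiv.Perm (Fin n) =>
        (∀ i, α i ∈ fpf n) ∧ hasTripleMatching α)).card : ℝ)
      ≤ (4 * m ^ 3 / n) * ((fpf n).card : ℝ) ^ m :=
  card_triple_matchings_le_general m n
end

section
/- There exists a real number α > 0 such that for all natural numbers m, n ≥ 1, the number of (m,n)-structure sets is at least (mn)^{α·mn}. -/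
/-!
Giving every `a_i` an involution `σ_i` of `B_n` and taking the blocks `{a_i, b, σ_i b}` yields a
structure set, and the involutions can be read back from it, so there are at least `I(n)^m`
structure sets, where `I(n)` is the number of involutions of an `n`-element set. Pairing the two
halves of `B_n` through a permutation gives `I(n) ≥ ⌊n/2⌋!`, which together with
`I(n) ≥ 2` for `n ≥ 2` yields `n^n ≤ I(n)^21`. By symmetry
`m ≤ n`, and then `(mn)^{mn/42} ≤ (n^n)^{m/21} ≤ I(n)^m`.
-/

open scoped Classical

/-- An `(m,n)`-structure set: a collection `S` of subsets of `A_m ⊔ B_n` such that every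
member has the form `{a_i, b_k, a_j, b_l}` (elements not necessarily distinct), and every
pair `(a, b) ∈ A_m × B_n` is contained in exactly one member of `S`. -/
def IsStructureSet (m n : ℕ) (S : Finset (Finset (Fin m ⊕ Fin n))) : Prop :=
  (∀ s ∈ S, ∃ i j : Fin m, ∃ k l : Fin n,
      s = ({Sum.inl i, Sum.inr k, Sum.inl j, Sum.inr l} : Finset (Fin m ⊕ Fin n))) ∧
  ∀ a : Fin m, ∀ b : Fin n, ∃! s, s ∈ S ∧ Sum.inl a ∈ s ∧ Sum.inr b ∈ s

open Finset Function Sum Equiv Nat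

section Involutions

variable {α β : Type*}

lemma card_involutions_pos [Finite α] : 0 < Nat.card {f : α → α // Involutive f} :=
  Nat.card_pos_iff.2 ⟨⟨⟨id, fun _ => rfl⟩⟩, inferInstance⟩

lemma two_le_card_involutions [Finite α] [Nontrivial α] :
    2 ≤ Nat.card {f : α → α // Involutive f} := by
  obtain ⟨a, b, hab⟩ := exists_pair_ne α
  have : Nontrivial {f : α → α // Involutive f} :=
    ⟨⟨⟨id, fun _ => rfl⟩, ⟨swap a b, swap_apply_self a b⟩, fun h => hab ?_⟩⟩
  · exact Finite.one_lt_card_iff_nontrivial.2 this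
  · simpa using congrFun (congrArg Subtype.val h) a

lemma card_involutions_congr (e : α ≃ β) :
    Nat.card {f : α → α // Involutive f} = Nat.card {f : β → β // Involutive f} :=
  Nat.card_congr <| (e.arrowCongr e).subtypeEquiv fun f => by
    refine ⟨fun hf x => by simp [hf _], fun hf x => ?_⟩
    simpa using hf (e x)

def pairingInvolution (σ : Perm α) : (α ⊕ α) ⊕ β → (α ⊕ α) ⊕ β :=
  Sum.map (Sum.elim (inr ∘ σ) (inl ∘ σ.symm)) id

lemma involutive_pairingInvolution (σ : Perm α) :
    Involutive (pairingInvolution (β := β) σ) := by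
  rintro ((a | a) | b) <;> simp [pairingInvolution]

lemma card_perm_le_card_involutions [Finite α] [Finite β] :
    Nat.card (Perm α) ≤ Nat.card {f : (α ⊕ α) ⊕ β → (α ⊕ α) ⊕ β // Involutive f} := by
  refine Nat.card_le_card_of_injective
    (fun σ => ⟨pairingInvolution σ, involutive_pairingInvolution σ⟩) fun σ τ h => ?_
  ext a
  simpa [pairingInvolution] using congrFun (congrArg Subtype.val h) (inl (inl a))

end Involutions

lemma factorial_le_card_involutions_fin {k n : ℕ} (h : 2 * k ≤ n) :
    k ! ≤ Nat.card {f : Fin n → Fin n // Involutive f} := by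
  have e : (Fin k ⊕ Fin k) ⊕ Fin (n - 2 * k) ≃ Fin n :=
    ((sumCongr finSumFinEquiv (Equiv.refl _)).trans finSumFinEquiv).trans (finCongr (by omega))
  calc k ! = Nat.card (Perm (Fin k)) := by rw [Nat.card_perm, Nat.card_fin]
    _ ≤ _ := card_perm_le_card_involutions
    _ = _ := card_involutions_congr e

lemma pow_self_le_factorial_half_pow {n : ℕ} (hn : 4 ≤ n) : n ^ n ≤ (n / 2)! ^ 21 := by
  rcases le_or_gt n 5 with h5 | h5
  · interval_cases n <;> norm_num [Nat.factorial]
  set k := n / 2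
  set q := k / 2
  have hq : (q + 1) ^ q ≤ k ! := by
    have := Nat.factorial_mul_pow_le_factorial (m := q) (n := k - q)
    rw [show q + (k - q) = k by omega] at this
    calc (q + 1) ^ q ≤ (q + 1) ^ (k - q) := Nat.pow_le_pow_right (by omega) (by omega)
      _ ≤ q ! * (q + 1) ^ (k - q) := Nat.le_mul_of_pos_left _ (Nat.factorial_pos _)
      _ ≤ k ! := this
  have hn7 : n ≤ 7 * q := by omega
  have h7 : 7 * q ≤ (q + 1) ^ 3 := by nlinarith [sq_nonneg q]
  calc n ^ n ≤ (7 * q) ^ n := Nat.pow_le_pow_left hn7 n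
    _ ≤ (7 * q) ^ (7 * q) := Nat.pow_le_pow_right (by omega) hn7
    _ ≤ ((q + 1) ^ 3) ^ (7 * q) := Nat.pow_le_pow_left h7 _
    _ = ((q + 1) ^ q) ^ 21 := by rw [← pow_mul, ← pow_mul]; ring_nf
    _ ≤ k ! ^ 21 := Nat.pow_le_pow_left hq 21

lemma pow_self_le_card_involutions_pow (n : ℕ) :
    n ^ n ≤ Nat.card {f : Fin n → Fin n // Involutive f} ^ 21 := by
  rcases le_or_gt n 1 with h1 | h1
  · calc n ^ n ≤ 1 := by interval_cases n <;> rfl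
      _ ≤ _ := Nat.one_le_pow _ _ card_involutions_pos
  rcases le_or_gt n 3 with h3 | h4
  · have : Nontrivial (Fin n) := Fin.nontrivial_iff_two_le.2 h1
    calc n ^ n ≤ 2 ^ 21 := by interval_cases n <;> norm_num
      _ ≤ _ := Nat.pow_le_pow_left two_le_card_involutions 21
  · exact (pow_self_le_factorial_half_pow h4).trans
      (Nat.pow_le_pow_left (factorial_le_card_involutions_fin (by omega)) 21)

noncomputable def structureSets (m n : ℕ) : Finset (Finset (Finset (Fin m ⊕ Fin n))) :=
  univ.filter (IsStructureSet m n)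

section Swap

variable {m n : ℕ}

def swapSides (S : Finset (Finset (Fin m ⊕ Fin n))) : Finset (Finset (Fin n ⊕ Fin m)) :=
  S.image (Finset.map (sumComm (Fin m) (Fin n)).toEmbedding)

lemma swapSides_injective : Injective (swapSides (m := m) (n := n)) :=
  image_injective (map_injective _)

lemma IsStructureSet.swap {S : Finset (Finset (Fin m ⊕ Fin n))}
    (hS : IsStructureSet m n S) : IsStructureSet n m (swapSides S) := by
  obtain ⟨hshape, hunique⟩ := hS
  refine ⟨?_, fun b a => ?_⟩
  · simp only [swapSides, mem_image, forall_exists_index, and_imp]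
    rintro _ s hs rfl
    obtain ⟨i, j, k, l, rfl⟩ := hshape s hs
    exact ⟨k, l, i, j, by ext (x | x) <;> simp⟩
  · obtain ⟨s, hs, hs_unique⟩ := hunique a b
    refine ⟨s.map (sumComm _ _).toEmbedding, ⟨mem_image_of_mem _ hs.1,
      by simpa [mem_map_equiv] using hs.2.2, by simpa [mem_map_equiv] using hs.2.1⟩, ?_⟩
    rintro _ ⟨ht', hb, ha⟩
    obtain ⟨t, ht, rfl⟩ := mem_image.1 ht'
    rw [hs_unique t ⟨ht, by simpa [mem_map_equiv] using ha, by simpa [mem_map_equiv] using hb⟩]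

end Swap

lemma card_structureSets_le_swap (m n : ℕ) : #(structureSets m n) ≤ #(structureSets n m) :=
  card_le_card_of_injOn swapSides
    (fun S hS => by simpa [structureSets] using (mem_filter.1 hS).2.swap)
    swapSides_injective.injOn

lemma card_structureSets_comm (m n : ℕ) : #(structureSets m n) = #(structureSets n m) :=
  (card_structureSets_le_swap m n).antisymm (card_structureSets_le_swap n m)

section OfInvolutions

variable {m n : ℕ}

def involutionBlock (σ : Fin m → Fin n → Fin n) (i : Fin m) (b : Fin n) :
    Finset (Fin m ⊕ Fin n) :=
  {inl i, inr b, inr (σ i b)}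

def structureSetOfInvolutions (σ : Fin m → Fin n → Fin n) : Finset (Finset (Fin m ⊕ Fin n)) :=
  univ.image fun p : Fin m × Fin n => involutionBlock σ p.1 p.2

lemma involutionBlock_mem (σ : Fin m → Fin n → Fin n) (i : Fin m) (b : Fin n) :
    involutionBlock σ i b ∈ structureSetOfInvolutions σ :=
  mem_image_of_mem _ (mem_univ (i, b))

lemma involutionBlock_apply {σ : Fin m → Fin n → Fin n} {i : Fin m} (hσ : Involutive (σ i))
    (b : Fin n) : involutionBlock σ i (σ i b) = involutionBlock σ i b := by
  simp only [involutionBlock, hσ b, pair_comm]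

lemma eq_of_involutionBlock_eq {σ τ : Fin m → Fin n → Fin n} {i : Fin m} {b : Fin n}
    (h : involutionBlock σ i b = involutionBlock τ i b) : σ i b = τ i b := by
  have hσ : inr (σ i b) ∈ involutionBlock τ i b := h ▸ by simp [involutionBlock]
  have hτ : inr (τ i b) ∈ involutionBlock σ i b := h ▸ by simp [involutionBlock]
  simp only [involutionBlock, mem_insert, mem_singleton, reduceCtorEq, inr.injEq,
    false_or] at hσ hτ
  grind

lemma isStructureSet_structureSetOfInvolutions {σ : Fin m → Fin n → Fin n}
    (hσ : ∀ i, Involutive (σ i)) : IsStructureSet m n (structureSetOfInvolutions σ) := by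
  refine ⟨?_, fun a b => ⟨involutionBlock σ a b, ⟨involutionBlock_mem σ a b, ?_, ?_⟩, ?_⟩⟩
  · simp only [structureSetOfInvolutions, mem_image, mem_univ, true_and, Prod.exists,
      forall_exists_index]
    rintro _ i b rfl
    exact ⟨i, i, b, σ i b, by ext x; simp [involutionBlock]; tauto⟩
  · simp [involutionBlock]
  · simp [involutionBlock]
  · simp only [structureSetOfInvolutions, mem_image, mem_univ, true_and, Prod.exists, and_imp,
      forall_exists_index]
    rintro _ i c rfl ha hb
    simp only [involutionBlock, mem_insert, mem_singleton, reduceCtorEq, inl.injEq, inr.injEq,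
      or_false, false_or] at ha hb
    subst ha
    rcases hb with rfl | rfl
    · rfl
    · exact (involutionBlock_apply (hσ a) c).symm

lemma structureSetOfInvolutions_injOn :
    {σ : Fin m → Fin n → Fin n | ∀ i, Involutive (σ i)}.InjOn structureSetOfInvolutions := by
  intro σ hσ τ hτ h
  funext i b
  apply eq_of_involutionBlock_eq
  obtain ⟨-, hunique⟩ := isStructureSet_structureSetOfInvolutions hτ
  refine (hunique i b).unique ⟨h ▸ involutionBlock_mem σ i b, ?_, ?_⟩
    ⟨involutionBlock_mem τ i b, ?_, ?_⟩ <;> simp [involutionBlock]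

end OfInvolutions

lemma card_involutions_pow_le_card_structureSets (m n : ℕ) :
    Nat.card {f : Fin n → Fin n // Involutive f} ^ m ≤ #(structureSets m n) := by
  rw [← Nat.card_eq_finsetCard]
  have hcard : Nat.card (Fin m → {f : Fin n → Fin n // Involutive f}) =
      Nat.card {f : Fin n → Fin n // Involutive f} ^ m := by
    rw [Nat.card_fun, Nat.card_fin]
  rw [← hcard]
  refine Nat.card_le_card_of_injective
    (fun σ => ⟨structureSetOfInvolutions fun i => (σ i).1, ?_⟩) fun σ τ h => ?_
  · simpa [structureSets] using isStructureSet_structureSetOfInvolutions fun i => (σ i).2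
  · funext i
    exact Subtype.ext <| congrFun (structureSetOfInvolutions_injOn (fun i => (σ i).2)
      (fun i => (τ i).2) (congrArg Subtype.val h)) i

lemma rpow_le_pow_of_pow_self_le {m n I K : ℕ} (hK : K ≠ 0) (hmn : m ≤ n) (hI : n ^ n ≤ I ^ K) :
    ((m * n : ℕ) : ℝ) ^ (1 / (2 * K) * ((m : ℝ) * n)) ≤ (I : ℝ) ^ m := by
  set x : ℝ := ((m * n : ℕ) : ℝ) with hx_def
  have hx : 0 ≤ x := Nat.cast_nonneg _
  have hroot : x ^ ((n : ℝ) / (2 * K)) ≤ I := by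
    refine le_of_pow_le_pow_left₀ (n := 2 * K) (by omega) (Nat.cast_nonneg _) ?_
    have hpow : (x ^ ((n : ℝ) / (2 * K))) ^ (2 * K) = x ^ n := by
      rw [← Real.rpow_natCast, ← Real.rpow_mul hx, ← Real.rpow_natCast]
      congr 1
      push_cast
      field_simp
    have hnat : (m * n) ^ n ≤ I ^ (2 * K) :=
      calc (m * n) ^ n ≤ (n * n) ^ n := Nat.pow_le_pow_left (Nat.mul_le_mul_right n hmn) n
        _ = (n ^ n) ^ 2 := by ring
        _ ≤ (I ^ K) ^ 2 := Nat.pow_le_pow_left hI 2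
        _ = I ^ (2 * K) := by ring
    rw [hpow, hx_def]
    exact_mod_cast hnat
  calc x ^ (1 / (2 * K) * ((m : ℝ) * n)) = (x ^ ((n : ℝ) / (2 * K))) ^ m := by
        rw [← Real.rpow_natCast, ← Real.rpow_mul hx]
        ring_nf
    _ ≤ (I : ℝ) ^ m := pow_le_pow_left₀ (Real.rpow_nonneg hx _) hroot m

/-- There is a real `α > 0` such that for all `m, n ≥ 1`, the number of
`(m,n)`-structure sets is at least `(mn)^{α·mn}`. -/
theorem card_structure_sets_ge :
    ∃ α : ℝ, 0 < α ∧ ∀ m n : ℕ, 1 ≤ m → 1 ≤ n →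
      ((m * n : ℕ) : ℝ) ^ (α * ((m : ℝ) * (n : ℝ))) ≤
        ((Finset.univ.filter (fun S : Finset (Finset (Fin m ⊕ Fin n)) =>
          IsStructureSet m n S)).card : ℝ) := by
  refine ⟨1 / (2 * (21 : ℕ)), by norm_num, fun m n hm hn => ?_⟩
  change _ ≤ (#(structureSets m n) : ℝ)
  wlog hmn : m ≤ n generalizing m n
  · rw [card_structureSets_comm, Nat.mul_comm, mul_comm (m : ℝ)]
    exact this n m hn hm (by omega)
  calc ((m * n : ℕ) : ℝ) ^ (1 / (2 * (21 : ℕ)) * ((m : ℝ) * n))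
      ≤ (Nat.card {f : Fin n → Fin n // Involutive f} : ℝ) ^ m :=
        rpow_le_pow_of_pow_self_le (by norm_num) hmn (pow_self_le_card_involutions_pow n)
    _ ≤ #(structureSets m n) := by exact_mod_cast card_involutions_pow_le_card_structureSets m n
end

section
/- Let Γ be a group that is hereditarily just-infinite and not residually finite (i.e., its finite residual FR(Γ) is nontrivial). Then the finite residual FR(Γ) has finite index in Γ and FR(Γ) is a simple group. -/
/-- The finite residual of a group: the intersection of all finite-index subgroups. -/
def finiteResidual (G : Type*) [Group G] : Subgroup G :=
  ⨅ (H : Subgroup G) (_ : H.FiniteIndex), H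

/-- A group is just-infinite if it is infinite and every nontrivial normal subgroup has
finite index. -/
def JustInfinite (G : Type*) [Group G] : Prop :=
  Infinite G ∧ ∀ N : Subgroup G, N.Normal → N ≠ ⊥ → N.FiniteIndex

lemma finiteResidual_le {G : Type*} [Group G] (H : Subgroup G) (hH : H.FiniteIndex) :
    finiteResidual G ≤ H := by
  exact le_trans (iInf_le _ H) (iInf_le _ hH)

lemma finiteResidual_normal {G : Type*} [Group G] : (finiteResidual G).Normal := by
  constructor
  intro n hn g
  simp only [finiteResidual, Subgroup.mem_iInf] at hn ⊢
  intro H hH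
  have hidx : (H.comap (MulAut.conj g).toMonoidHom).index = H.index :=
    H.index_comap_of_surjective (MulAut.conj g).surjective
  have hfi : (H.comap (MulAut.conj g).toMonoidHom).FiniteIndex :=
    ⟨by rw [hidx]; exact hH.index_ne_zero⟩
  have := hn _ hfi
  simpa using this

/-- If a group `Γ` is hereditarily just-infinite (every finite-index subgroup, including
`Γ` itself, is just-infinite) and not residually finite (its finite residual is
nontrivial), then the finite residual has finite index in `Γ` and is a simple group. -/
theorem finiteResidual_finiteIndex_and_simple (G : Type*) [Group G]
    (hJI : ∀ H : Subgroup G, H.FiniteIndex → JustInfinite H)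
    (hnrf : finiteResidual G ≠ ⊥) :
    (finiteResidual G).FiniteIndex ∧ IsSimpleGroup (finiteResidual G) := by
  classical
  set K := finiteResidual G with hK
  -- Step 1: K has finite index, using that ⊤ is just-infinite.
  have htopJI := hJI ⊤ inferInstance
  -- Transfer K to a subgroup of ↥⊤
  have hKnorm : K.Normal := finiteResidual_normal
  set N' : Subgroup ↥(⊤ : Subgroup G) := K.comap (⊤ : Subgroup G).subtype with hN'
  have hN'norm : N'.Normal := hKnorm.comap _
  have hN'ne : N' ≠ ⊥ := by
    intro h
    apply hnrf
    rw [Subgroup.eq_bot_iff_forall] at h ⊢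
    intro x hx
    have := h ⟨x, Subgroup.mem_top x⟩ hx
    simpa using congrArg Subtype.val this
  have hN'fi : N'.FiniteIndex := htopJI.2 N' hN'norm hN'ne
  have hKfi : K.FiniteIndex := by
    constructor
    have : N'.index = K.relIndex ⊤ := rfl
    rw [Subgroup.relIndex_top_right] at this
    rw [← this]
    exact hN'fi.index_ne_zero
  refine ⟨hKfi, ?_⟩
  -- Step 2: K is simple.
  have hKJI := hJI K hKfi
  haveI : Infinite ↥K := hKJI.1
  haveI : Nontrivial ↥K := inferInstance
  constructor
  intro N hN
  by_contra h
  push_neg at h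
  obtain ⟨hNbot, hNtop⟩ := h
  have hNfi : N.FiniteIndex := hKJI.2 N hN hNbot
  -- M := image of N in G has finite index
  set M : Subgroup G := N.map K.subtype with hM
  have hMle : M ≤ K := Subgroup.map_subtype_le N
  have hMrel : M.relIndex K = N.index := by
    have : M.subgroupOf K = N :=
      Subgroup.comap_map_eq_self_of_injective (Subgroup.subtype_injective K) N
    rw [Subgroup.relIndex, this]
  have hMidx : M.index ≠ 0 := by
    rw [← Subgroup.relIndex_mul_index hMle, hMrel]
    exact mul_ne_zero hNfi.index_ne_zero hKfi.index_ne_zero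
  have hKleM : K ≤ M := finiteResidual_le M ⟨hMidx⟩
  apply hNtop
  rw [eq_top_iff]
  intro x _
  obtain ⟨y, hy, hyx⟩ := hKleM x.2
  have : y = x := Subtype.ext hyx
  rwa [← this]
end
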